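/- arXiv:2302.06246 — 4 statements merged into one kernel-verified Lean document; each statement's English description precedes it below -/
import Mathlib

section
/- Let h_i and h_{i'} be ν-homomorphisms that are P-homomorphisms of I. Then h_i ≼ h_{i'} holds if and only if for every N ∈ ν the following two conditions hold: (1) if h_i N ∉ ν, then h_{i'} N = h_i N; and (2) if h_i N ∈ ν, then for every N' ∈ ν with h_i N = h_i N' it holds that h_{i'} N = h_{i'} N'. -/
/-- A ν-homomorphism: a function fixing every term outside ν. -/
def NuHom {T : Type*} (ν : Set T) (h : T → T) : Prop :=
  ∀ t, t ∉ ν → h t = t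

/-- h₁ ≼ h₂ : h₁ is less specific than h₂. -/
def LessSpec {T : Type*} (ν : Set T) (h₁ h₂ : T → T) : Prop :=
  ∃ h : T → T, NuHom ν h ∧ h ∘ h₁ = h₂

/-- Action of a function on an atom (p, l). -/
def mapAtom {T Pred : Type*} (h : T → T) (a : Pred × List T) : Pred × List T :=
  (a.1, a.2.map h)

/-- A P-homomorphism of I : a ν-homomorphism mapping I into I. -/
def PHom {T Pred : Type*} (ν : Set T) (I : Set (Pred × List T)) (h : T → T) : Prop :=
  NuHom ν h ∧ ∀ a ∈ I, mapAtom h a ∈ I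

theorem stmt_0 {T Pred : Type*} (ν : Set T) (I : Set (Pred × List T))
    (hi hi' : T → T) (Hi : PHom ν I hi) (Hi' : PHom ν I hi') :
    LessSpec ν hi hi' ↔
      ∀ N ∈ ν,
        (hi N ∉ ν → hi' N = hi N) ∧
        (hi N ∈ ν → ∀ N' ∈ ν, hi N = hi N' → hi' N = hi' N') := by
  classical
  constructor
  · rintro ⟨h, hν, hcomp⟩ N hN
    have hN' : hi' N = h (hi N) := by
      rw [← hcomp]; rfl
    constructor
    · intro hout
      rw [hN', hν _ hout]
    · intro _ N' _ heq
      have : hi' N' = h (hi N') := by rw [← hcomp]; rfl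
      rw [hN', this, heq]
  · intro H
    set P : T → Prop := fun t => ∃ N, N ∈ ν ∧ hi N = t with hP
    refine ⟨fun t => if ht : P t then hi' ht.choose else t, ?_, ?_⟩
    · intro t ht
      by_cases hp : P t
      · simp only [dif_pos hp]
        obtain ⟨hNν, hNe⟩ := hp.choose_spec
        have := (H _ hNν).1 (by rw [hNe]; exact ht)
        rw [this, hNe]
      · simp [dif_neg hp]
    · funext x
      simp only [Function.comp_apply]
      by_cases hx : x ∈ ν
      · have hp : P (hi x) := ⟨x, hx, rfl⟩
        rw [dif_pos hp]
        obtain ⟨hNν, hNe⟩ := hp.choose_spec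
        by_cases hin : hi x ∈ ν
        · exact (H _ hNν).2 (by rw [hNe]; exact hin) x hx hNe
        · have h1 := (H _ hNν).1 (by rw [hNe]; exact hin)
          have h2 := (H _ hx).1 hin
          rw [h1, hNe, h2]
      · have hfix : hi x = x := Hi.1 x hx
        have hfix' : hi' x = x := Hi'.1 x hx
        rw [hfix, hfix']
        by_cases hp : P x
        · rw [dif_pos hp]
          obtain ⟨hNν, hNe⟩ := hp.choose_spec
          have := (H _ hNν).1 (by rw [hNe]; exact hx)
          rw [this, hNe]
        · rw [dif_neg hp]
end

section
/- Assume ν is finite. Let h_i be a P-homomorphism of I such that: (a) γ(h) ≤ γ(h_i) for every P-homomorphism h of I, and (b) π(h_i) ≤ π(h) for every P-homomorphism h of I satisfying h N = h_i N for all N ∈ ν with h_i N ∉ ν. Then h_i is one of the most specific P-homomorphisms of I: for every P-homomorphism h_k of I with h_i ≼ h_k, it also holds that h_k ≼ h_i. -/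
/-- γ(h): the number of nulls N ∈ ν with h N ∉ ν. -/
noncomputable def gammaCount {T : Type*} (ν : Set T) (h : T → T) : ℕ :=
  {N ∈ ν | h N ∉ ν}.ncard

/-- π(h): the number of distinct elements of ν occurring in h '' ν. -/
noncomputable def piCount {T : Type*} (ν : Set T) (h : T → T) : ℕ :=
  ((h '' ν) ∩ ν).ncard

theorem stmt_2 {T Pred : Type*} (ν : Set T) (hfin : ν.Finite)
    (I : Set (Pred × List T)) (hi : T → T) (Hi : PHom ν I hi)
    (ha : ∀ h : T → T, PHom ν I h → gammaCount ν h ≤ gammaCount ν hi)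
    (hb : ∀ h : T → T, PHom ν I h →
      (∀ N ∈ ν, hi N ∉ ν → h N = hi N) → piCount ν hi ≤ piCount ν h) :
    ∀ hk : T → T, PHom ν I hk → LessSpec ν hi hk → LessSpec ν hk hi := by

  intro hk Hk ⟨g, hg, hgc⟩
  have hgf : ∀ t, hk t = g (hi t) := fun t => (congrFun hgc t).symm
  -- fact 1: if hi N is a constant, hk N = hi N
  have f1 : ∀ N ∈ ν, hi N ∉ ν → hk N = hi N := by
    intro N _ h
    rw [hgf N, hg _ h]
  -- γ comparison: {N ∈ ν | hi N ∉ ν} ⊆ {N ∈ ν | hk N ∉ ν}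
  have hsub : {N ∈ ν | hi N ∉ ν} ⊆ {N ∈ ν | hk N ∉ ν} := by
    intro N ⟨hN, h⟩
    exact ⟨hN, by rw [f1 N hN h]; exact h⟩
  have heq : {N ∈ ν | hi N ∉ ν} = {N ∈ ν | hk N ∉ ν} :=
    Set.eq_of_subset_of_ncard_le hsub (ha hk Hk) (hfin.subset (Set.sep_subset _ _))
  -- fact 2: hk N ∉ ν → hi N ∉ ν
  have f2 : ∀ N ∈ ν, hk N ∉ ν → hi N ∉ ν := by
    intro N hN h
    have : N ∈ {N ∈ ν | hi N ∉ ν} := heq ▸ ⟨hN, h⟩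
    exact this.2
  -- π comparison
  have hpi : piCount ν hi ≤ piCount ν hk := hb hk Hk f1
  set S : Set T := (hi '' ν) ∩ ν with hS
  have hSfin : S.Finite := hfin.inter_of_right _
  have hksub : (hk '' ν) ∩ ν ⊆ g '' S := by
    rintro t ⟨⟨N, hN, rfl⟩, htν⟩
    have hiNν : hi N ∈ ν := by
      by_contra h
      exact h (f1 N hN h ▸ htν)
    exact ⟨hi N, ⟨⟨N, hN, rfl⟩, hiNν⟩, (hgf N).symm⟩
  have hcard1 : ((hk '' ν) ∩ ν).ncard ≤ (g '' S).ncard :=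
    Set.ncard_le_ncard hksub (hSfin.image g)
  have hcard2 : (g '' S).ncard ≤ S.ncard := Set.ncard_image_le hSfin
  have hpk : piCount ν hk = ((hk '' ν) ∩ ν).ncard := rfl
  have hpi' : piCount ν hi = S.ncard := rfl
  have hcards : (g '' S).ncard = S.ncard := by omega
  have hinj : Set.InjOn g S := Set.injOn_of_ncard_image_eq hcards hSfin
  -- g '' S ⊆ ν
  have hgSν : g '' S ⊆ ν := by
    have : (hk '' ν) ∩ ν = g '' S := by
      apply Set.eq_of_subset_of_ncard_le hksub _ (hSfin.image g)
      rw [hcards]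
      omega
    rw [← this]
    exact Set.inter_subset_right
  classical
  refine ⟨fun t => if ht : t ∈ g '' S then ht.choose else t, ?_, ?_⟩
  · intro t ht
    show (if h : t ∈ g '' S then h.choose else t) = t
    rw [dif_neg (fun h => ht (hgSν h))]
  · funext t
    show (if h : hk t ∈ g '' S then h.choose else hk t) = hi t
    by_cases htν : t ∈ ν
    · rw [hgf t]
      by_cases hitν : hi t ∈ ν
      · have hmem : g (hi t) ∈ g '' S := ⟨hi t, ⟨⟨t, htν, rfl⟩, hitν⟩, rfl⟩
        rw [dif_pos hmem]
        exact hinj hmem.choose_spec.1 ⟨⟨t, htν, rfl⟩, hitν⟩ hmem.choose_spec.2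
      · rw [hg _ hitν, dif_neg (fun h => hitν (hgSν h))]
    · rw [Hk.1 t htν, dif_neg (fun h => htν (hgSν h)), Hi.1 t htν]
end

section
/- Let h₁ and h₂ be ν-homomorphisms with h₁ ≼ h₂ and h₂ ≼ h₁ (i.e., h₁ and h₂ are equal up to a renaming of nulls). Then: (1) for every N ∈ ν, h₁ N ∉ ν if and only if h₂ N ∉ ν; (2) h₁ and h₂ agree on every N ∈ ν with h₁ N ∉ ν; and (3) for all N, N' ∈ ν, h₁ N = h₁ N' if and only if h₂ N = h₂ N'. -/
theorem stmt_5 {T : Type*} (ν : Set T) (h₁ h₂ : T → T)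
    (H₁ : NuHom ν h₁) (H₂ : NuHom ν h₂)
    (h12 : LessSpec ν h₁ h₂) (h21 : LessSpec ν h₂ h₁) :
    (∀ N ∈ ν, (h₁ N ∉ ν ↔ h₂ N ∉ ν)) ∧
    (∀ N ∈ ν, h₁ N ∉ ν → h₁ N = h₂ N) ∧
    (∀ N ∈ ν, ∀ N' ∈ ν, (h₁ N = h₁ N' ↔ h₂ N = h₂ N')) := by
  obtain ⟨g, hg, hgc⟩ := h12
  obtain ⟨f, hf, hfc⟩ := h21
  have hg2 : ∀ t, g (h₁ t) = h₂ t := fun t => congrFun hgc t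
  have hf2 : ∀ t, f (h₂ t) = h₁ t := fun t => congrFun hfc t
  have key : ∀ N, h₁ N ∉ ν → h₁ N = h₂ N := by
    intro N hN
    rw [← hg2 N, hg _ hN]
  have key2 : ∀ N, h₂ N ∉ ν → h₂ N = h₁ N := by
    intro N hN
    rw [← hf2 N, hf _ hN]
  refine ⟨fun N _ => ⟨fun h => (key N h) ▸ h, fun h => (key2 N h) ▸ h⟩,
    fun N _ h => key N h, fun N _ N' _ => ⟨fun h => ?_, fun h => ?_⟩⟩
  · rw [← hg2 N, ← hg2 N', h]
  · rw [← hf2 N, ← hf2 N', h]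
end

section
/- Let A be a finite set of atoms, and let B₁ and B₂ be two minimal simplifications of A. Then B₁ and B₂ are isomorphic: there exist a homomorphism f from B₁ to B₂ and a homomorphism g from B₂ to B₁ such that mapAtom g (mapAtom f a) = a for every a ∈ B₁ and mapAtom f (mapAtom g a) = a for every a ∈ B₂ (in particular mapAtom f maps B₁ onto B₂ and mapAtom g maps B₂ onto B₁). -/
/-- A homomorphism from a set of atoms A to a set of atoms B:
a function fixing every constant (term outside 𝒩) and mapping A into B. -/
def Hom {T Pred : Type*} (𝒩 : Set T)
    (A B : Set (Pred × List T)) (f : T → T) : Prop :=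
  (∀ t, t ∉ 𝒩 → f t = t) ∧ ∀ a ∈ A, mapAtom f a ∈ B

/-- Two sets of atoms are (homomorphically) equivalent. -/
def Equiv' {T Pred : Type*} (𝒩 : Set T) (A B : Set (Pred × List T)) : Prop :=
  (∃ f : T → T, Hom 𝒩 A B f) ∧ (∃ g : T → T, Hom 𝒩 B A g)

/-- A simplification of A: a subset of A equivalent to A. -/
def Simplification {T Pred : Type*} (𝒩 : Set T)
    (A B : Set (Pred × List T)) : Prop :=
  B ⊆ A ∧ Equiv' 𝒩 A B

/-- A minimal simplification of A. -/
def MinimalSimplification {T Pred : Type*} (𝒩 : Set T)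
    (A B : Set (Pred × List T)) : Prop :=
  Simplification 𝒩 A B ∧ ∀ C : Set (Pred × List T), C ⊂ B → ¬ Equiv' 𝒩 B C


section Aux

variable {T Pred : Type*} {𝒩 : Set T}

lemma mapAtom_id (a : Pred × List T) : mapAtom (id : T → T) a = a := by
  simp [mapAtom]

lemma mapAtom_comp (u v : T → T) (a : Pred × List T) :
    mapAtom (u ∘ v) a = mapAtom u (mapAtom v a) := by
  simp [mapAtom, List.map_map]

lemma Hom.comp' {A B C : Set (Pred × List T)} {u v : T → T}
    (hu : Hom 𝒩 A B u) (hv : Hom 𝒩 B C v) : Hom 𝒩 A C (v ∘ u) := by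
  refine ⟨fun t ht => by simp [hu.1 t ht, hv.1 t ht], fun a ha => ?_⟩
  rw [mapAtom_comp]
  exact hv.2 _ (hu.2 a ha)

lemma Hom.mono' {A A' B : Set (Pred × List T)} {u : T → T}
    (hu : Hom 𝒩 A B u) (h : A' ⊆ A) : Hom 𝒩 A' B u :=
  ⟨hu.1, fun a ha => hu.2 a (h ha)⟩

lemma Hom.iterate' {B : Set (Pred × List T)} {u : T → T}
    (hu : Hom 𝒩 B B u) (n : ℕ) : Hom 𝒩 B B (u^[n]) := by
  induction n with
  | zero =>
      exact ⟨fun t _ => rfl, fun a ha => by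
        simpa [Function.iterate_zero, mapAtom_id] using ha⟩
  | succ n ih =>
      rw [Function.iterate_succ']
      exact ih.comp' hu

lemma image_eq_of_minimal {A B : Set (Pred × List T)} {h : T → T}
    (hmin : MinimalSimplification 𝒩 A B) (hh : Hom 𝒩 B B h) :
    mapAtom h '' B = B := by
  have hsub : mapAtom h '' B ⊆ B := by
    rintro _ ⟨a, ha, rfl⟩; exact hh.2 a ha
  by_contra hne
  exact hmin.2 _ (hsub.ssubset_of_ne hne)
    ⟨⟨h, hh.1, fun a ha => ⟨a, ha, rfl⟩⟩,
      ⟨id, fun t _ => rfl, fun a ha => by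
        rw [mapAtom_id]; exact hsub ha⟩⟩

end Aux

theorem stmt_8 {T Pred : Type*} (𝒩 : Set T) (A B₁ B₂ : Set (Pred × List T))
    (hA : A.Finite)
    (h₁ : MinimalSimplification 𝒩 A B₁) (h₂ : MinimalSimplification 𝒩 A B₂) :
    ∃ f g : T → T, Hom 𝒩 B₁ B₂ f ∧ Hom 𝒩 B₂ B₁ g ∧
      (∀ a ∈ B₁, mapAtom g (mapAtom f a) = a) ∧
      (∀ a ∈ B₂, mapAtom f (mapAtom g a) = a) := by
  classical
  obtain ⟨⟨hB₁A, ⟨⟨v, hv⟩, -⟩⟩, hmin₁⟩ := h₁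
  obtain ⟨⟨hB₂A, ⟨⟨u, hu⟩, -⟩⟩, hmin₂⟩ := h₂
  -- f : hom B₁ → B₂, g₀ : hom B₂ → B₁
  set f := u with hfdef
  have hf : Hom 𝒩 B₁ B₂ f := hu.mono' hB₁A
  have hg₀ : Hom 𝒩 B₂ B₁ v := hv.mono' hB₂A
  set h := v ∘ f with hhdef
  have hh : Hom 𝒩 B₁ B₁ h := hf.comp' hg₀
  haveI : Finite ↥B₁ := (hA.subset hB₁A).to_subtype
  have himg : mapAtom h '' B₁ = B₁ :=
    image_eq_of_minimal ⟨⟨hB₁A, ⟨⟨v, hv⟩, ⟨id, fun t _ => rfl,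
      fun a ha => by rw [mapAtom_id]; exact hB₁A ha⟩⟩⟩, hmin₁⟩ hh
  set S : ↥B₁ → ↥B₁ := fun a => ⟨mapAtom h a, hh.2 a a.2⟩ with hSdef
  have hSsurj : Function.Surjective S := by
    rintro ⟨b, hb⟩
    obtain ⟨a, ha, hab⟩ := himg ▸ hb
    exact ⟨⟨a, ha⟩, Subtype.ext hab⟩
  have hSbij : Function.Bijective S :=
    ⟨Finite.injective_iff_surjective.mpr hSsurj, hSsurj⟩
  set e : Equiv.Perm ↥B₁ := Equiv.ofBijective S hSbij with hedef
  set m := orderOf e with hmdef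
  have hm : 0 < m := orderOf_pos e
  have hpow : ∀ (k : ℕ) (x : ↥B₁), ((e ^ k) x : Pred × List T) = mapAtom (h^[k]) x := by
    intro k
    induction k with
    | zero => intro x; simp [mapAtom_id]
    | succ k ih =>
        intro x
        rw [pow_succ, Equiv.Perm.mul_apply]
        have : (e x : Pred × List T) = mapAtom h x := rfl
        rw [Function.iterate_succ, mapAtom_comp]
        have := ih (e x)
        rw [this]
        rfl
  have hfix : ∀ a ∈ B₁, mapAtom (h^[m]) a = a := by
    intro a ha
    have := hpow m ⟨a, ha⟩
    rw [pow_orderOf_eq_one] at this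
    simpa using this.symm
  set g := h^[m - 1] ∘ v with hgdef
  have hg : Hom 𝒩 B₂ B₁ g := hg₀.comp' (hh.iterate' (m - 1))
  have key1 : ∀ a ∈ B₁, mapAtom g (mapAtom f a) = a := by
    intro a ha
    rw [hgdef, mapAtom_comp, ← mapAtom_comp v f, ← hhdef, ← mapAtom_comp,
      ← Function.iterate_succ, show (m - 1).succ = m from Nat.succ_pred_eq_of_pos hm]
    exact hfix a ha
  have hh₂ : Hom 𝒩 B₂ B₂ (f ∘ g) := hg.comp' hf
  have himg₂ : mapAtom (f ∘ g) '' B₂ = B₂ :=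
    image_eq_of_minimal ⟨⟨hB₂A, ⟨⟨u, hu⟩, ⟨id, fun t _ => rfl,
      fun a ha => by rw [mapAtom_id]; exact hB₂A ha⟩⟩⟩, hmin₂⟩ hh₂
  have key2 : ∀ b ∈ B₂, mapAtom f (mapAtom g b) = b := by
    intro b hb
    obtain ⟨c, hc, hcb⟩ := himg₂ ▸ hb
    rw [mapAtom_comp] at hcb
    have hgc : mapAtom g c ∈ B₁ := hg.2 c hc
    calc mapAtom f (mapAtom g b)
        = mapAtom f (mapAtom g (mapAtom f (mapAtom g c))) := by rw [hcb]
      _ = mapAtom f (mapAtom g c) := by rw [key1 _ hgc]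
      _ = b := hcb
  exact ⟨f, g, hf, hg, key1, key2⟩
end
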